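/- arXiv:2512.07315 — 2 statements merged into one kernel-verified Lean document; each statement's English description precedes it below -/
import Mathlib

section
/- Let τ^H be the tetrahedron with vertices A=(0,0,0), B=(1,0,0), C=(1/2, 1/2, 0), D=(1/2, 1/2, 1/2). The edge AB is a longest edge of τ^H; letting M=(1/2,0,0), each of the sub-tetrahedra A M C D and M B C D is similar to the path tetrahedron with vertices (0,0,0), (1,0,0), (1,1,0), (1,1,1). -/
/-- Euclidean distance between two points of `ℝ³` (represented as `Fin 3 → ℝ`). -/
noncomputable def dist3 (x y : Fin 3 → ℝ) : ℝ :=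
  Real.sqrt ((x 0 - y 0) ^ 2 + (x 1 - y 1) ^ 2 + (x 2 - y 2) ^ 2)

/-- Two subsets of `ℝ³` are similar if a similarity transformation `x ↦ b + λ R x`
with `λ > 0` and `R ∈ O(3)` maps one onto the other. -/
def SimilarSet (S T : Set (Fin 3 → ℝ)) : Prop :=
  ∃ (lam : ℝ) (R : Matrix (Fin 3) (Fin 3) ℝ) (b : Fin 3 → ℝ),
    0 < lam ∧ R ∈ Matrix.orthogonalGroup (Fin 3) ℝ ∧
    (fun x => b + lam • R.mulVec x) '' S = T

/-! Scaling the first child A M C D by 2 gives the path tetrahedron on the nose; the second child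
M B C D is the mirror image of the first in the plane x₀ = 1/2, so composing that scaling with the
reflection x₀ ↦ 1 - x₀ maps it onto the path tetrahedron, with M and B trading places. -/

open Matrix

theorem Matrix.diagonal_mem_orthogonalGroup {n R : Type*} [Fintype n] [DecidableEq n] [CommRing R]
    (d : n → R) (hd : ∀ i, d i * d i = 1) : diagonal d ∈ orthogonalGroup n R := by
  rw [mem_orthogonalGroup_iff', diagonal_transpose, diagonal_mul_diagonal, funext hd, diagonal_one]

theorem similarSet_insert_four {lam : ℝ} {R : Matrix (Fin 3) (Fin 3) ℝ} {b : Fin 3 → ℝ}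
    (hlam : 0 < lam) (hR : R ∈ orthogonalGroup (Fin 3) ℝ) {p q r s p' q' r' s' : Fin 3 → ℝ}
    (hp : b + lam • R *ᵥ p = p') (hq : b + lam • R *ᵥ q = q')
    (hr : b + lam • R *ᵥ r = r') (hs : b + lam • R *ᵥ s = s') :
    SimilarSet {p, q, r, s} {p', q', r', s'} :=
  ⟨lam, R, b, hlam, hR, by simp only [Set.image_insert_eq, Set.image_singleton, hp, hq, hr, hs]⟩

theorem dist3_le_one_iff {x y : Fin 3 → ℝ} :
    dist3 x y ≤ 1 ↔ (x 0 - y 0) ^ 2 + (x 1 - y 1) ^ 2 + (x 2 - y 2) ^ 2 ≤ 1 :=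
  Real.sqrt_le_one

/-- LEB of τ^H at the midpoint of its longest edge AB gives two children each similar to the path tetrahedron. -/
theorem tauH_children_similar_path :
    let A : Fin 3 → ℝ := ![0, 0, 0]
    let B : Fin 3 → ℝ := ![1, 0, 0]
    let C : Fin 3 → ℝ := ![1/2, 1/2, 0]
    let D : Fin 3 → ℝ := ![1/2, 1/2, 1/2]
    let M : Fin 3 → ℝ := ![1/2, 0, 0]
    (∀ x ∈ ({A, B, C, D} : Set (Fin 3 → ℝ)), ∀ y ∈ ({A, B, C, D} : Set (Fin 3 → ℝ)),
      dist3 x y ≤ dist3 A B) ∧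
    SimilarSet ({A, M, C, D} : Set (Fin 3 → ℝ)) ({![0, 0, 0], ![1, 0, 0], ![1, 1, 0], ![1, 1, 1]} : Set (Fin 3 → ℝ)) ∧
    SimilarSet ({M, B, C, D} : Set (Fin 3 → ℝ)) ({![0, 0, 0], ![1, 0, 0], ![1, 1, 0], ![1, 1, 1]} : Set (Fin 3 → ℝ)) := by
  intro A B C D M
  have hAB : dist3 A B = 1 := by norm_num [dist3, A, B, cons_val_two, head_cons]
  refine ⟨?longest, ?left, ?right⟩
  case longest =>
    intro x hx y hy
    rw [hAB, dist3_le_one_iff]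
    simp only [Set.mem_insert_iff, Set.mem_singleton_iff] at hx hy
    rcases hx with rfl | rfl | rfl | rfl <;> rcases hy with rfl | rfl | rfl | rfl <;>
      norm_num [A, B, C, D, cons_val_two, head_cons]
  case left =>
    refine similarSet_insert_four (lam := 2) (R := 1) (b := 0) two_pos (one_mem _) ?_ ?_ ?_ ?_ <;>
      ext i <;> fin_cases i <;> norm_num [A, M, C, D]
  case right =>
    rw [Set.insert_comm (![0, 0, 0] : Fin 3 → ℝ)]
    have hreflect : diagonal ![-1, 1, 1] ∈ orthogonalGroup (Fin 3) ℝ :=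
      diagonal_mem_orthogonalGroup _ fun i => by fin_cases i <;> norm_num
    refine similarSet_insert_four (lam := 2) (b := ![2, 0, 0]) two_pos hreflect ?_ ?_ ?_ ?_ <;>
      ext i <;> fin_cases i <;> norm_num [M, B, C, D, mulVec_diagonal]
end

section
/- Let τ^P be the tetrahedron with vertices A=(0,0,0), B=(1,0,0), C=(1/3, √2/3, 0), D=(2/3, √2/6, √6/6). The edge AB is a longest edge of τ^P; letting M=(1/2,0,0), each of the sub-tetrahedra A M C D and M B C D is similar to the tetrahedron τ^Q with vertices (0,0,0), (1,0,0), (1/2, √2/4, 0), (1/2, 0, 1/2). -/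
/-!
The child A M C D has edges AM = MC = MD = 1/2, AC = CD = 1/√3 and AD = √(2/3): these are the
edges of τ^Q scaled by √(2/3), and an explicit similarity of ratio √6/2 carries A M C D onto
τ^Q. The half-turn about the line through M and the midpoint of CD is a symmetry of τ^P that
exchanges A ↔ B and C ↔ D; it carries M B C D onto A M C D, so the second child is similar to
τ^Q as well.
-/

open Matrix

local notation "𝐀" => (![0, 0, 0] : Fin 3 → ℝ)
local notation "𝐁" => (![1, 0, 0] : Fin 3 → ℝ)
local notation "𝐂" => (![1/3, √2 / 3, 0] : Fin 3 → ℝ)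
local notation "𝐃" => (![2/3, √2 / 6, √6 / 6] : Fin 3 → ℝ)
local notation "𝐌" => (![1/2, 0, 0] : Fin 3 → ℝ)

def tauQ : Set (Fin 3 → ℝ) := {![0, 0, 0], ![1, 0, 0], ![1/2, √2 / 4, 0], ![1/2, 0, 1/2]}

theorem sqrt_six_eq_sqrt_two_mul_sqrt_three : √6 = √2 * √3 := by
  rw [← Real.sqrt_mul (by norm_num)]
  norm_num

theorem SimilarSet.trans {S T U : Set (Fin 3 → ℝ)} :
    SimilarSet S T → SimilarSet T U → SimilarSet S U := by
  rintro ⟨l₁, R₁, b₁, hl₁, hR₁, rfl⟩ ⟨l₂, R₂, b₂, hl₂, hR₂, rfl⟩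
  refine ⟨l₂ * l₁, R₂ * R₁, b₂ + l₂ • R₂ *ᵥ b₁, mul_pos hl₂ hl₁, mul_mem hR₂ hR₁, ?_⟩
  rw [Set.image_image]
  congr 1
  funext x
  simp only [mulVec_add, mulVec_smul, mulVec_mulVec, smul_add, mul_smul, add_assoc]

theorem SimilarSet.of_vertices {p₁ p₂ p₃ p₄ q₁ q₂ q₃ q₄ : Fin 3 → ℝ} {lam : ℝ}
    {R : Matrix (Fin 3) (Fin 3) ℝ} (b : Fin 3 → ℝ) (hlam : 0 < lam)
    (hR : R ∈ orthogonalGroup (Fin 3) ℝ) (h₁ : b + lam • R *ᵥ p₁ = q₁)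
    (h₂ : b + lam • R *ᵥ p₂ = q₂) (h₃ : b + lam • R *ᵥ p₃ = q₃)
    (h₄ : b + lam • R *ᵥ p₄ = q₄) :
    SimilarSet {p₁, p₂, p₃, p₄} {q₁, q₂, q₃, q₄} :=
  ⟨lam, R, b, hlam, hR, by simp only [Set.image_insert_eq, Set.image_singleton, h₁, h₂, h₃, h₄]⟩

theorem dist3_le_one_of_mem_tauP :
    ∀ x ∈ ({𝐀, 𝐁, 𝐂, 𝐃} : Set (Fin 3 → ℝ)), ∀ y ∈ ({𝐀, 𝐁, 𝐂, 𝐃} : Set (Fin 3 → ℝ)),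
      dist3 x y ≤ 1 := by
  intro x hx y hy
  simp only [Set.mem_insert_iff, Set.mem_singleton_iff] at hx hy
  rw [dist3, Real.sqrt_le_one]
  rcases hx with rfl | rfl | rfl | rfl <;> rcases hy with rfl | rfl | rfl | rfl <;>
    simp <;> ring_nf <;> norm_num

noncomputable def childRotation : Matrix (Fin 3) (Fin 3) ℝ :=
  !![√6 / 3, √3 / 6, 1/2; √3 / 3, -(√6 / 6), -(√2 / 2); 0, √3 / 2, -(1/2)]

theorem childRotation_mem_orthogonalGroup : childRotation ∈ orthogonalGroup (Fin 3) ℝ := by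
  rw [mem_orthogonalGroup_iff]
  ext i j
  fin_cases i <;> fin_cases j <;>
    simp [childRotation, mul_apply, Fin.sum_univ_three, one_apply,
      sqrt_six_eq_sqrt_two_mul_sqrt_three] <;>
    grind [Real.sq_sqrt]

/-- The half-turn about the axis `(0, √3/2, 1/2)`; composed with the translation by `B` it is the
half-turn about the line through `M` and the midpoint of `CD`. -/
noncomputable def halfTurn : Matrix (Fin 3) (Fin 3) ℝ :=
  !![-1, 0, 0; 0, 1/2, √3 / 2; 0, √3 / 2, -(1/2)]

theorem halfTurn_mem_orthogonalGroup : halfTurn ∈ orthogonalGroup (Fin 3) ℝ := by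
  rw [mem_orthogonalGroup_iff]
  ext i j
  fin_cases i <;> fin_cases j <;> simp [halfTurn, mul_apply, Fin.sum_univ_three, one_apply] <;>
    grind [Real.sq_sqrt]

theorem similarSet_AMCD_tauQ : SimilarSet {𝐀, 𝐌, 𝐂, 𝐃} tauQ := by
  -- A ↦ (0,0,0), M ↦ (1/2,√2/4,0), C ↦ (1/2,0,1/2), D ↦ (1,0,0)
  rw [tauQ, Set.insert_comm 𝐁, Set.pair_comm 𝐁]
  refine .of_vertices 0 (by positivity : 0 < √6 / 2) childRotation_mem_orthogonalGroup
    ?_ ?_ ?_ ?_ <;>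
    ext i <;> fin_cases i <;> simp [childRotation, sqrt_six_eq_sqrt_two_mul_sqrt_three] <;>
    grind [Real.sq_sqrt]

theorem similarSet_MBCD_AMCD : SimilarSet {𝐌, 𝐁, 𝐂, 𝐃} {𝐀, 𝐌, 𝐂, 𝐃} := by
  have hsource : ({𝐌, 𝐁, 𝐂, 𝐃} : Set (Fin 3 → ℝ)) = {𝐌, 𝐁, 𝐃, 𝐂} := by rw [Set.pair_comm]
  rw [hsource, Set.insert_comm 𝐀]
  refine .of_vertices 𝐁 one_pos halfTurn_mem_orthogonalGroup ?_ ?_ ?_ ?_ <;>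
    ext i <;> fin_cases i <;> simp [halfTurn, sqrt_six_eq_sqrt_two_mul_sqrt_three] <;>
    grind [Real.sq_sqrt]

/-- LEB of τ^P at the midpoint of its longest edge AB gives two children each similar to τ^Q. -/
theorem tauP_children_similar_tauQ :
    let A : Fin 3 → ℝ := ![0, 0, 0]
    let B : Fin 3 → ℝ := ![1, 0, 0]
    let C : Fin 3 → ℝ := ![1/3, Real.sqrt 2 / 3, 0]
    let D : Fin 3 → ℝ := ![2/3, Real.sqrt 2 / 6, Real.sqrt 6 / 6]
    let M : Fin 3 → ℝ := ![1/2, 0, 0]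
    (∀ x ∈ ({A, B, C, D} : Set (Fin 3 → ℝ)), ∀ y ∈ ({A, B, C, D} : Set (Fin 3 → ℝ)),
      dist3 x y ≤ dist3 A B) ∧
    SimilarSet ({A, M, C, D} : Set (Fin 3 → ℝ)) ({![0, 0, 0], ![1, 0, 0], ![1/2, Real.sqrt 2 / 4, 0], ![1/2, 0, 1/2]} : Set (Fin 3 → ℝ)) ∧
    SimilarSet ({M, B, C, D} : Set (Fin 3 → ℝ)) ({![0, 0, 0], ![1, 0, 0], ![1/2, Real.sqrt 2 / 4, 0], ![1/2, 0, 1/2]} : Set (Fin 3 → ℝ)) := by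
  intro A B C D M
  have hAB : dist3 A B = 1 := by simp [A, B, dist3]
  exact ⟨fun x hx y hy => hAB ▸ dist3_le_one_of_mem_tauP x hx y hy, similarSet_AMCD_tauQ,
    similarSet_MBCD_AMCD.trans similarSet_AMCD_tauQ⟩
end
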